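/- arXiv:1501.02700 — 6 statements merged into one kernel-verified Lean document; each statement's English description precedes it below -/
import Mathlib

section
/- Let α > 1, λ > 0, k ≥ 1, and set u_n = (k + λ/k)^n α^{n(2k−n−1)/2} / n!. Then for all 0 ≤ j ≤ k−1, u_j < u_{2k−1−j}; i.e., v_j := u_{2k−1−j} − u_j > 0. -/
/-!
Write `k = j + m + 1` and `c = k + λ/k`, so that `2k - 1 - j = j + (2m + 1)`. The exponent
`n (2k - n - 1) / 2` is invariant under `n ↦ 2k - 1 - n`, so the powers of `α` agree and the
claim reduces to `c^j / j! < c^(j+2m+1) / (j+2m+1)!`, i.e. to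
`(j+1) (j+2) ⋯ (j+2m+1) < c^(2m+1)`. Pairing the factors symmetrically around the middle one,
`j + m + 1 = k`, bounds the product by AM-GM by `k^(2m+1)`, and `k < c`.
-/

open Nat

theorem Nat.ascFactorial_two_mul_add_one_le_pow (a m : ℕ) :
    a.ascFactorial (2 * m + 1) ≤ (a + m) ^ (2 * m + 1) := by
  induction m generalizing a with
  | zero => simp [Nat.ascFactorial_succ]
  | succ m ih =>
    have hsplit : a.ascFactorial (2 * (m + 1) + 1)
        = a * (a + 2 * m + 2) * (a + 1).ascFactorial (2 * m + 1) := by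
      rw [show 2 * (m + 1) + 1 = 2 * m + 1 + 1 + 1 by ring, Nat.ascFactorial_succ,
        Nat.ascFactorial_succ (k := 2 * m + 1), ← Nat.succ_ascFactorial]
      ring
    have houter : a * (a + 2 * m + 2) ≤ (a + (m + 1)) ^ 2 := by nlinarith
    calc a.ascFactorial (2 * (m + 1) + 1)
        ≤ (a + (m + 1)) ^ 2 * (a + 1 + m) ^ (2 * m + 1) := by
          rw [hsplit]; exact Nat.mul_le_mul houter (ih (a + 1))
      _ = (a + (m + 1)) ^ (2 * (m + 1) + 1) := by ring

theorem pow_div_factorial_lt_pow_div_factorial {c : ℝ} (j m : ℕ) (hc : (j + m + 1 : ℝ) < c) :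
    c ^ j / j ! < c ^ (j + (2 * m + 1)) / (j + (2 * m + 1))! := by
  have hc0 : 0 < c := by linarith
  have hprod : ((j + 1).ascFactorial (2 * m + 1) : ℝ) < c ^ (2 * m + 1) := by
    calc ((j + 1).ascFactorial (2 * m + 1) : ℝ) ≤ ((j + 1 + m : ℕ) : ℝ) ^ (2 * m + 1) := by
          exact_mod_cast Nat.ascFactorial_two_mul_add_one_le_pow (j + 1) m
      _ < c ^ (2 * m + 1) := by
          apply pow_lt_pow_left₀ _ (by positivity) (by omega)
          push_cast; linarith
  rw [← Nat.factorial_mul_ascFactorial, pow_add, Nat.cast_mul, mul_div_mul_comm,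
    lt_mul_iff_one_lt_right (by positivity), one_lt_div (by positivity)]
  exact hprod

/-- Let `α > 1`, `λ > 0`, `k ≥ 1`, and `u_n = (k + λ/k)^n α^{n(2k-n-1)/2} / n!`.
Then for all `0 ≤ j ≤ k-1`, `u_j < u_{2k-1-j}`, i.e. `v_j := u_{2k-1-j} - u_j > 0`. -/
theorem u_lt_u (α lam : ℝ) (hα : 1 < α) (hlam : 0 < lam) (k : ℕ) (hk : 1 ≤ k)
    (u : ℕ → ℝ)
    (hu : ∀ n : ℕ, u n = ((k : ℝ) + lam / (k : ℝ)) ^ n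
      * α ^ (((n : ℝ) * (2 * (k : ℝ) - (n : ℝ) - 1)) / 2) / (n.factorial : ℝ))
    (j : ℕ) (hj : j ≤ k - 1) :
    u j < u (2 * k - 1 - j) := by
  obtain ⟨m, rfl⟩ : ∃ m, k = j + m + 1 := ⟨k - 1 - j, by omega⟩
  have hn : 2 * (j + m + 1) - 1 - j = j + (2 * m + 1) := by omega
  set c : ℝ := ((j + m + 1 : ℕ) : ℝ) + lam / ((j + m + 1 : ℕ) : ℝ)
  have hc : ((j + m + 1 : ℕ) : ℝ) < c := lt_add_of_pos_right _ (by positivity)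
  push_cast at hc
  have hexp : ((j + (2 * m + 1) : ℕ) : ℝ)
        * (2 * ((j + m + 1 : ℕ) : ℝ) - ((j + (2 * m + 1) : ℕ) : ℝ) - 1)
      = (j : ℝ) * (2 * ((j + m + 1 : ℕ) : ℝ) - j - 1) := by
    push_cast; ring
  rw [hn, hu, hu, hexp, mul_div_right_comm, mul_div_right_comm (c ^ _)]
  exact mul_lt_mul_of_pos_right (pow_div_factorial_lt_pow_div_factorial j m hc)
    (Real.rpow_pos_of_pos (by linarith) _)
end

section
/- For α > 1, the series h(α) = Σ_{j=1}^∞ (2j−1)(−1)^{j−1} α^{−j(j−1)/2} converges and equals the infinite product ∏_{k=1}^∞ (1 − α^{−k})^3 (a special case of Jacobi's triple product identity). -/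
/-!
Write `(q; q)_n = ∏_{k=1}^n (1 - q^k)`. The polynomial `J_n(X) = ∏_{t=0}^{2n} (q^t X + q^n)`
equals `q^N (1 + X) ∏_{k=1}^n (X + q^k)(1 + q^k X)` with `N = C(n,2) + n + n²`, so
`J_n'(-1) = (-1)^n q^N (q; q)_n²`. Cauchy's q-binomial theorem gives the coefficients of `J_n`;
those of `X^(n-j)` and `X^(n+1+j)` agree, and pairing them in
`J_n'(-1) = ∑ i i (-1)^(i-1) [X^i] J_n` yields the finite identity
`∑_{j ≤ n} (2j+1) (-1)^j q^(j(j+1)/2) [2n+1, n-j]_q = (q; q)_n²`.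
As `n → ∞`, `[2n+1, n-j]_q = (q; q)_{2n+1} / ((q; q)_{n-j} (q; q)_{n+1+j})` tends to
`(q; q)_∞⁻¹` and stays below `(q; q)_∞⁻²`, so Tannery's theorem turns the finite identity
into `h(α) (q; q)_∞⁻¹ = (q; q)_∞²` for `q = α⁻¹`.
-/

open Finset Polynomial

lemma Nat.succ_choose_two (k : ℕ) : (k + 1).choose 2 = k.choose 2 + k := by
  rw [Nat.choose_succ_succ', Nat.choose_one_right, add_comm]

lemma sum_range_add_self_eq_sum_pairs {M : Type*} [AddCommMonoid M] (f : ℕ → M) (n : ℕ) :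
    ∑ i ∈ range ((n + 1) + (n + 1)), f i =
      ∑ j ∈ range (n + 1), (f (n - j) + f (n + 1 + j)) := by
  rw [sum_range_add, ← sum_range_reflect, ← sum_add_distrib]
  simp

section Algebra

variable {R : Type*} [CommRing R]

lemma eval_derivative_mul_of_isRoot {p r : R[X]} {x : R} (h : r.IsRoot x) :
    (derivative (p * r)).eval x = p.eval x * (derivative r).eval x := by
  simp [derivative_mul, h.eq_zero]

lemma mul_natCast_mul_neg_one_pow_sub_one (a : R) (i : ℕ) :
    a * i * (-1) ^ (i - 1) = -(a * i * (-1) ^ i) := by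
  cases i <;> simp [pow_succ]

def qPochhammer (q : R) (n : ℕ) : R := ∏ t ∈ range n, (1 - q ^ (t + 1))

def qBinomial (q : R) : ℕ → ℕ → R
  | _, 0 => 1
  | 0, _ + 1 => 0
  | m + 1, k + 1 => qBinomial q m k + q ^ (k + 1) * qBinomial q m (k + 1)

variable (q : R)

@[simp] lemma qPochhammer_zero : qPochhammer q 0 = 1 := prod_range_zero _

lemma qPochhammer_succ (n : ℕ) : qPochhammer q (n + 1) = qPochhammer q n * (1 - q ^ (n + 1)) :=
  prod_range_succ _ _

@[simp] lemma qBinomial_zero_right (m : ℕ) : qBinomial q m 0 = 1 := by cases m <;> rfl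

lemma qBinomial_succ_succ (m k : ℕ) :
    qBinomial q (m + 1) (k + 1) = qBinomial q m k + q ^ (k + 1) * qBinomial q m (k + 1) := rfl

lemma qBinomial_eq_zero_of_lt {m k : ℕ} (h : m < k) : qBinomial q m k = 0 := by
  induction m generalizing k with
  | zero => obtain ⟨k, rfl⟩ := Nat.exists_eq_succ_of_ne_zero (by omega : k ≠ 0); rfl
  | succ m ih =>
    obtain ⟨k, rfl⟩ := Nat.exists_eq_succ_of_ne_zero (by omega : k ≠ 0)
    rw [qBinomial_succ_succ, ih (by omega), ih (by omega), mul_zero, add_zero]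

lemma qBinomial_mul_qPochhammer_mul {m k : ℕ} (h : k ≤ m) :
    qBinomial q m k * qPochhammer q k * qPochhammer q (m - k) = qPochhammer q m := by
  induction m generalizing k with
  | zero =>
    obtain rfl : k = 0 := by omega
    simp
  | succ m ih =>
    cases k with
    | zero => simp
    | succ k =>
      have hk : qBinomial q m k * qPochhammer q (k + 1) * qPochhammer q (m - k)
          = qPochhammer q m * (1 - q ^ (k + 1)) := by
        rw [qPochhammer_succ, ← ih (k := k) (by omega)]; ring
      rw [qBinomial_succ_succ, Nat.add_sub_add_right, qPochhammer_succ q m]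
      rcases (by omega : k = m ∨ k < m) with rfl | hkm
      · rw [qBinomial_eq_zero_of_lt q (Nat.lt_succ_self k), mul_zero, add_zero, hk]
      · have hk1 := ih (k := k + 1) hkm
        have hpow : q ^ (k + 1) * q ^ (m - k) = q ^ (m + 1) := by
          rw [← pow_add]; congr 1; omega
        rw [add_mul, add_mul, hk, show m - k = m - (k + 1) + 1 by omega,
          qPochhammer_succ q (m - (k + 1)), show m - (k + 1) + 1 = m - k by omega]
        linear_combination (q ^ (k + 1) * (1 - q ^ (m - k))) * hk1 - qPochhammer q m * hpow

/-- Cauchy's q-binomial theorem. -/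
theorem coeff_prod_range_C_mul_X_add_C (a c : R) (m k : ℕ) :
    (∏ t ∈ range m, (C (a * q ^ t) * X + C c)).coeff k =
      qBinomial q m k * q ^ k.choose 2 * a ^ k * c ^ (m - k) := by
  induction m generalizing a k with
  | zero => cases k <;> simp [qBinomial, coeff_one]
  | succ m ih =>
    have hshift : ∏ t ∈ range m, (C (a * q ^ (t + 1)) * X + C c)
        = ∏ t ∈ range m, (C (a * q * q ^ t) * X + C c) := by
      simp only [pow_succ, mul_assoc, mul_comm q]
    rw [prod_range_succ', hshift, pow_zero, mul_one, mul_add, ← mul_assoc, coeff_add, coeff_mul_C,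
      mul_comm _ (C a), mul_assoc, coeff_C_mul]
    cases k with
    | zero => rw [coeff_mul_X_zero, ih]; simp [pow_succ]
    | succ k =>
      rw [coeff_mul_X, ih, ih, qBinomial_succ_succ, Nat.succ_choose_two, Nat.add_sub_add_right]
      rcases lt_or_ge k m with hkm | hmk
      · rw [show m - k = m - (k + 1) + 1 by omega]
        ring
      · rw [qBinomial_eq_zero_of_lt q (by omega : m < k + 1)]
        ring

lemma prod_range_pow_sub_pow (n : ℕ) :
    ∏ t ∈ range n, (q ^ n - q ^ t) = (-1) ^ n * q ^ n.choose 2 * qPochhammer q n := by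
  induction n with
  | zero => simp
  | succ n ih =>
    have hfactor : ∏ t ∈ range n, (q ^ (n + 1) - q ^ (t + 1)) =
        q ^ n * ∏ t ∈ range n, (q ^ n - q ^ t) := by
      calc ∏ t ∈ range n, (q ^ (n + 1) - q ^ (t + 1))
          = ∏ t ∈ range n, (q * (q ^ n - q ^ t)) := prod_congr rfl fun t _ => by ring
        _ = q ^ n * ∏ t ∈ range n, (q ^ n - q ^ t) := by
          rw [prod_mul_distrib, prod_const, card_range]
    rw [prod_range_succ', hfactor, ih, qPochhammer_succ, Nat.succ_choose_two]
    ring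

noncomputable def jacobiPoly (n : ℕ) : R[X] :=
  ∏ t ∈ range (2 * n + 1), (C (q ^ t) * X + C (q ^ n))

lemma coeff_jacobiPoly (n i : ℕ) :
    (jacobiPoly q n).coeff i =
      qBinomial q (2 * n + 1) i * q ^ i.choose 2 * (q ^ n) ^ (2 * n + 1 - i) := by
  rw [jacobiPoly]
  simpa using coeff_prod_range_C_mul_X_add_C q 1 (q ^ n) (2 * n + 1) i

lemma eval_derivative_jacobiPoly (n : ℕ) :
    (derivative (jacobiPoly q n)).eval (-1) =
      (-1) ^ n * q ^ (n.choose 2 + n + n * n) * qPochhammer q n ^ 2 := by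
  have hsplit : jacobiPoly q n = (∏ t ∈ range n, (C (q ^ t) * X + C (q ^ n))) *
      (∏ k ∈ range n, (C (q ^ (n + (k + 1))) * X + C (q ^ n))) *
      (C (q ^ n) * X + C (q ^ n)) := by
    rw [jacobiPoly, show 2 * n + 1 = n + (n + 1) by ring, prod_range_add, prod_range_succ',
      add_zero, mul_assoc]
  have hupper : ∏ k ∈ range n, (q ^ n - q ^ (n + (k + 1))) = (q ^ n) ^ n * qPochhammer q n :=
    calc ∏ k ∈ range n, (q ^ n - q ^ (n + (k + 1)))
        = ∏ k ∈ range n, (q ^ n * (1 - q ^ (k + 1))) := prod_congr rfl fun k _ => by ring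
      _ = (q ^ n) ^ n * qPochhammer q n := by
        rw [prod_mul_distrib, prod_const, card_range, qPochhammer]
  rw [hsplit, eval_derivative_mul_of_isRoot (by simp)]
  simp only [eval_mul, eval_prod, eval_add, eval_C, eval_X, derivative_add, derivative_mul,
    derivative_C, derivative_X, zero_mul, zero_add, mul_one, add_zero, mul_neg_one,
    neg_add_eq_sub]
  rw [prod_range_pow_sub_pow, hupper]
  ring

lemma natDegree_jacobiPoly_le (n : ℕ) : (jacobiPoly q n).natDegree ≤ 2 * n + 1 :=
  (natDegree_prod_le _ _).trans <|
    (sum_le_card_nsmul _ _ 1 fun _ _ => natDegree_linear_le).trans (by simp)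

end Algebra

section Field

variable {K : Type*} [Field K] (q : K)

lemma qBinomial_eq_div (hD : ∀ k, qPochhammer q k ≠ 0) {m k : ℕ} (h : k ≤ m) :
    qBinomial q m k = qPochhammer q m / (qPochhammer q k * qPochhammer q (m - k)) := by
  rw [eq_div_iff (mul_ne_zero (hD k) (hD _)), ← mul_assoc, qBinomial_mul_qPochhammer_mul q h]

lemma coeff_jacobiPoly_sub (hD : ∀ k, qPochhammer q k ≠ 0) {n j : ℕ} (h : j ≤ n) :
    (jacobiPoly q n).coeff (n - j) = q ^ ((j + 1).choose 2 + (n.choose 2 + n + n * n)) *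
      (qPochhammer q (2 * n + 1) / (qPochhammer q (n - j) * qPochhammer q (n + 1 + j))) := by
  obtain ⟨r, rfl⟩ := Nat.exists_eq_add_of_le h
  have hexp : r.choose 2 + (j + r) * (j + r + 1 + j) =
      (j + 1).choose 2 + ((j + r).choose 2 + (j + r) + (j + r) * (j + r)) := by
    apply Nat.cast_injective (R := ℚ); push_cast [Nat.cast_choose_two]; ring
  rw [coeff_jacobiPoly, qBinomial_eq_div q hD (by omega), Nat.add_sub_cancel_left,
    show 2 * (j + r) + 1 - r = j + r + 1 + j by omega, mul_assoc, ← pow_mul, ← pow_add, hexp,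
    mul_comm]

lemma coeff_jacobiPoly_add (hD : ∀ k, qPochhammer q k ≠ 0) {n j : ℕ} (h : j ≤ n) :
    (jacobiPoly q n).coeff (n + 1 + j) = q ^ ((j + 1).choose 2 + (n.choose 2 + n + n * n)) *
      (qPochhammer q (2 * n + 1) / (qPochhammer q (n - j) * qPochhammer q (n + 1 + j))) := by
  obtain ⟨r, rfl⟩ := Nat.exists_eq_add_of_le h
  have hexp : (j + r + 1 + j).choose 2 + (j + r) * r =
      (j + 1).choose 2 + ((j + r).choose 2 + (j + r) + (j + r) * (j + r)) := by
    apply Nat.cast_injective (R := ℚ); push_cast [Nat.cast_choose_two]; ring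
  rw [coeff_jacobiPoly, qBinomial_eq_div q hD (by omega), Nat.add_sub_cancel_left,
    show 2 * (j + r) + 1 - (j + r + 1 + j) = r by omega, mul_assoc, ← pow_mul, ← pow_add, hexp,
    mul_comm, mul_comm (qPochhammer q r)]

theorem sum_range_jacobi (hq : q ≠ 0) (hD : ∀ k, qPochhammer q k ≠ 0) (n : ℕ) :
    ∑ j ∈ range (n + 1), (2 * j + 1) * (-1) ^ j * q ^ (j + 1).choose 2 *
      (qPochhammer q (2 * n + 1) / (qPochhammer q (n - j) * qPochhammer q (n + 1 + j))) =
      qPochhammer q n ^ 2 := by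
  set N := n.choose 2 + n + n * n
  have hpair : ∀ j ∈ range (n + 1),
      -((jacobiPoly q n).coeff (n - j) * (n - j : ℕ) * (-1) ^ (n - j)) +
        -((jacobiPoly q n).coeff (n + 1 + j) * (n + 1 + j : ℕ) * (-1) ^ (n + 1 + j)) =
      (-1) ^ n * q ^ N * ((2 * j + 1) * (-1) ^ j * q ^ (j + 1).choose 2 *
        (qPochhammer q (2 * n + 1) / (qPochhammer q (n - j) * qPochhammer q (n + 1 + j)))) := by
    intro j hj
    have hjn : j ≤ n := Nat.lt_succ_iff.1 (mem_range.1 hj)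
    rw [coeff_jacobiPoly_sub q hD hjn, coeff_jacobiPoly_add q hD hjn]
    obtain ⟨r, rfl⟩ := Nat.exists_eq_add_of_le hjn
    have hs1 : (-1 : K) ^ (j + r + 1 + j) = -(-1) ^ r := by
      rw [show j + r + 1 + j = r + 1 + 2 * j by ring, pow_add, pow_mul]; simp [pow_succ]
    have hs2 : (-1 : K) ^ (j + r) * (-1) ^ j = (-1) ^ r := by
      rw [← pow_add, show j + r + j = r + 2 * j by ring, pow_add, pow_mul]; simp
    rw [Nat.add_sub_cancel_left, hs1, pow_add]
    push_cast
    linear_combination (-(2 * j + 1) * q ^ (j + 1).choose 2 * q ^ N *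
      (qPochhammer q (2 * (j + r) + 1) / (qPochhammer q r * qPochhammer q (j + r + 1 + j)))) * hs2
  have hsum := (eval_derivative_jacobiPoly q n).symm
  rw [derivative_eval, sum_over_range' _ (fun _ => by simp) (2 * n + 2)
    (by have := natDegree_jacobiPoly_le q n; omega),
    sum_congr rfl fun i _ => mul_natCast_mul_neg_one_pow_sub_one _ i,
    show 2 * n + 2 = (n + 1) + (n + 1) by ring,
    sum_range_add_self_eq_sum_pairs, sum_congr rfl hpair, ← mul_sum] at hsum
  exact (mul_left_cancel₀ (mul_ne_zero (pow_ne_zero n (neg_ne_zero.2 one_ne_zero))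
    (pow_ne_zero N hq)) hsum).symm

end Field

section Real

open Filter Topology

variable {q : ℝ}

lemma one_sub_pow_succ_pos (hq0 : 0 ≤ q) (hq1 : q < 1) (t : ℕ) : 0 < 1 - q ^ (t + 1) :=
  sub_pos.2 (pow_lt_one₀ hq0 hq1 t.succ_ne_zero)

lemma qPochhammer_pos (hq0 : 0 ≤ q) (hq1 : q < 1) (n : ℕ) : 0 < qPochhammer q n :=
  prod_pos fun t _ => one_sub_pow_succ_pos hq0 hq1 t

lemma qPochhammer_le_one (hq0 : 0 ≤ q) (hq1 : q < 1) (n : ℕ) : qPochhammer q n ≤ 1 :=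
  prod_le_one (fun t _ => (one_sub_pow_succ_pos hq0 hq1 t).le)
    fun _ _ => sub_le_self _ (pow_nonneg hq0 _)

lemma qPochhammer_antitone (hq0 : 0 ≤ q) (hq1 : q < 1) : Antitone (qPochhammer q) :=
  antitone_nat_of_succ_le fun n => by
    rw [qPochhammer_succ]
    exact mul_le_of_le_one_right (qPochhammer_pos hq0 hq1 n).le
      (sub_le_self _ (pow_nonneg hq0 _))

lemma summable_log_one_sub_pow (hq0 : 0 ≤ q) (hq1 : q < 1) :
    Summable fun k : ℕ => Real.log (1 - q ^ (k + 1)) := by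
  have hgeom : Summable fun k : ℕ => -q ^ (k + 1) :=
    ((summable_nat_add_iff 1).2 (summable_geometric_of_lt_one hq0 hq1)).neg
  simpa only [sub_eq_add_neg] using Real.summable_log_one_add_of_summable hgeom

lemma hasProd_one_sub_pow (hq0 : 0 ≤ q) (hq1 : q < 1) :
    HasProd (fun k : ℕ => 1 - q ^ (k + 1)) (∏' k : ℕ, (1 - q ^ (k + 1))) :=
  (Real.multipliable_of_summable_log (one_sub_pow_succ_pos hq0 hq1)
    (summable_log_one_sub_pow hq0 hq1)).hasProd

lemma tprod_one_sub_pow_pos (hq0 : 0 ≤ q) (hq1 : q < 1) :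
    0 < ∏' k : ℕ, (1 - q ^ (k + 1)) := by
  rw [← Real.rexp_tsum_eq_tprod (one_sub_pow_succ_pos hq0 hq1) (summable_log_one_sub_pow hq0 hq1)]
  exact Real.exp_pos _

lemma tendsto_qPochhammer (hq0 : 0 ≤ q) (hq1 : q < 1) :
    Tendsto (qPochhammer q) atTop (𝓝 (∏' k : ℕ, (1 - q ^ (k + 1)))) :=
  (hasProd_one_sub_pow hq0 hq1).tendsto_prod_nat

lemma tprod_one_sub_pow_le_qPochhammer (hq0 : 0 ≤ q) (hq1 : q < 1) (n : ℕ) :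
    ∏' k : ℕ, (1 - q ^ (k + 1)) ≤ qPochhammer q n :=
  (qPochhammer_antitone hq0 hq1).le_of_tendsto (tendsto_qPochhammer hq0 hq1) n

lemma tendsto_qPochhammer_div (hq0 : 0 ≤ q) (hq1 : q < 1) (j : ℕ) :
    Tendsto
      (fun n => qPochhammer q (2 * n + 1) / (qPochhammer q (n - j) * qPochhammer q (n + 1 + j)))
      atTop (𝓝 (∏' k : ℕ, (1 - q ^ (k + 1)))⁻¹) := by
  set P := ∏' k : ℕ, (1 - q ^ (k + 1))
  have hP := (tprod_one_sub_pow_pos hq0 hq1).ne'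
  have hD := tendsto_qPochhammer hq0 hq1
  have hnum : Tendsto (fun n => qPochhammer q (2 * n + 1)) atTop (𝓝 P) :=
    hD.comp (tendsto_atTop_mono (fun n => (by omega : n ≤ 2 * n + 1)) tendsto_id)
  have hden : Tendsto (fun n => qPochhammer q (n - j) * qPochhammer q (n + 1 + j)) atTop
      (𝓝 (P * P)) :=
    (hD.comp (tendsto_sub_atTop_nat j)).mul
      (hD.comp (tendsto_atTop_mono (fun n => (by omega : n ≤ n + 1 + j)) tendsto_id))
  have hlim := hnum.div hden (mul_ne_zero hP hP)
  rwa [div_mul_cancel_left₀ hP] at hlim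

lemma qPochhammer_div_le (hq0 : 0 ≤ q) (hq1 : q < 1) (a b c : ℕ) :
    qPochhammer q a / (qPochhammer q b * qPochhammer q c) ≤
      ((∏' k : ℕ, (1 - q ^ (k + 1))) ^ 2)⁻¹ := by
  have hP := tprod_one_sub_pow_pos hq0 hq1
  rw [sq, ← one_div]
  exact div_le_div₀ zero_le_one (qPochhammer_le_one hq0 hq1 a) (mul_pos hP hP)
    (mul_le_mul (tprod_one_sub_pow_le_qPochhammer hq0 hq1 b)
      (tprod_one_sub_pow_le_qPochhammer hq0 hq1 c) hP.le (qPochhammer_pos hq0 hq1 b).le)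

lemma summable_mul_pow_choose_two (hq0 : 0 ≤ q) (hq1 : q < 1) :
    Summable fun j : ℕ => (2 * (j : ℝ) + 1) * q ^ (j + 1).choose 2 := by
  have hgeom : Summable fun j : ℕ => (2 * (j : ℝ) + 1) * q ^ j := by
    simpa [add_mul, mul_assoc] using
      ((summable_pow_mul_geometric_of_norm_lt_one 1
        (by rwa [Real.norm_of_nonneg hq0] : ‖q‖ < 1)).mul_left 2).add
      (summable_geometric_of_lt_one hq0 hq1)
  refine hgeom.of_nonneg_of_le (fun j => by positivity) fun j => ?_
  exact mul_le_mul_of_nonneg_left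
    (pow_le_pow_of_le_one hq0 hq1.le (by rw [Nat.succ_choose_two]; omega)) (by positivity)

theorem hasSum_jacobi (hq0 : 0 < q) (hq1 : q < 1) :
    HasSum (fun j : ℕ => (2 * (j : ℝ) + 1) * (-1) ^ j * q ^ (j + 1).choose 2)
      ((∏' k : ℕ, (1 - q ^ (k + 1))) ^ 3) := by
  set P := ∏' k : ℕ, (1 - q ^ (k + 1))
  set c := fun j : ℕ => (2 * (j : ℝ) + 1) * (-1) ^ j * q ^ (j + 1).choose 2
  have hP : 0 < P := tprod_one_sub_pow_pos hq0.le hq1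
  have hnorm : ∀ j, ‖c j‖ = (2 * (j : ℝ) + 1) * q ^ (j + 1).choose 2 := fun j => by
    simp [c, abs_of_pos hq0, abs_of_nonneg (by positivity : (0 : ℝ) ≤ 2 * j + 1)]
  let F : ℕ → ℕ → ℝ := fun n j =>
    if j ≤ n then
      c j * (qPochhammer q (2 * n + 1) / (qPochhammer q (n - j) * qPochhammer q (n + 1 + j)))
    else 0
  have hF : ∀ n, ∑' j, F n j = qPochhammer q n ^ 2 := fun n => by
    rw [tsum_eq_sum (s := range (n + 1)) fun j hj => if_neg (by simpa using hj),
      ← sum_range_jacobi q hq0.ne' (fun k => (qPochhammer_pos hq0.le hq1 k).ne') n]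
    exact sum_congr rfl fun j hj => if_pos (by simp at hj; omega)
  have hlim : ∀ j, Tendsto (F · j) atTop (𝓝 (c j * P⁻¹)) := fun j =>
    ((tendsto_qPochhammer_div hq0.le hq1 j).const_mul (c j)).congr'
      ((eventually_ge_atTop j).mono fun n hn => (if_pos hn).symm)
  have hbound : ∀ n j,
      ‖F n j‖ ≤ (2 * (j : ℝ) + 1) * q ^ (j + 1).choose 2 * (P ^ 2)⁻¹ := by
    intro n j
    simp only [F]
    split_ifs
    · rw [norm_mul, hnorm, Real.norm_of_nonneg (div_pos (qPochhammer_pos hq0.le hq1 _)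
        (mul_pos (qPochhammer_pos hq0.le hq1 _) (qPochhammer_pos hq0.le hq1 _))).le]
      exact mul_le_mul_of_nonneg_left (qPochhammer_div_le hq0.le hq1 _ _ _) (by positivity)
    · rw [norm_zero]
      positivity
  have hsq := tendsto_tsum_of_dominated_convergence
    ((summable_mul_pow_choose_two hq0.le hq1).mul_right _) hlim (Eventually.of_forall hbound)
  simp only [hF, tsum_mul_right] at hsq
  have hc : Summable c :=
    (summable_mul_pow_choose_two hq0.le hq1).of_norm_bounded fun j => (hnorm j).le
  have huniq := tendsto_nhds_unique hsq ((tendsto_qPochhammer hq0.le hq1).pow 2)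
  rw [← div_eq_mul_inv, div_eq_iff hP.ne'] at huniq
  rw [show P ^ 3 = ∑' j, c j by rw [huniq]; ring]
  exact hc.hasSum

end Real

/-- Jacobi's triple product identity (special case): for `α > 1`, the series
`h(α) = Σ_{j=1}^∞ (2j-1)(-1)^{j-1} α^{-j(j-1)/2}` converges and equals
`∏_{k=1}^∞ (1 - α^{-k})^3`. (Here the series is reindexed by `j ↦ j+1`.) -/
theorem jacobi_triple_product (α : ℝ) (hα : 1 < α) :
    Multipliable (fun k : ℕ => (1 - α⁻¹ ^ (k + 1)) ^ 3) ∧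
    HasSum (fun j : ℕ => (2 * (j : ℝ) + 1) * (-1) ^ j * α⁻¹ ^ (j * (j + 1) / 2))
      (∏' k : ℕ, (1 - α⁻¹ ^ (k + 1)) ^ 3) := by
  have hq0 : 0 < α⁻¹ := inv_pos.2 (zero_lt_one.trans hα)
  have hq1 : α⁻¹ < 1 := inv_lt_one_of_one_lt₀ hα
  have hprod := (hasProd_one_sub_pow hq0.le hq1).pow 3
  refine ⟨hprod.multipliable, ?_⟩
  rw [hprod.tprod_eq]
  simpa only [Nat.choose_two_right, Nat.add_sub_cancel, mul_comm _ (_ + 1)] using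
    hasSum_jacobi hq0 hq1
end

section
/- For α > 1, h(α) = Σ_{j=1}^∞ (2j−1)(−1)^{j−1} α^{−j(j−1)/2} is strictly positive. -/
/-!
Put `q = α⁻¹ = exp (-8πt)`. Since `(2j+1)² = 8 · j(j+1)/2 + 1`, the series equals
`exp (πt) G(t)` for the odd theta series `G(t) = ∑ (-1)ʲ (2j+1) exp (-π (2j+1)² t)`.
For `t ≥ 1/4` the first term `exp (-πt)` of `G(t)` dominates the rest, which is bounded by a
geometric series of ratio `3 exp (-2π) < 1/2`. For `t < 1/4`, Jacobi's transformation
`G(t) = 8 (16t)^(-3/2) G(1/(16t))`, which is the functional equation of the odd Hurwitz kernels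
at `a = 1/4`, reduces to `t > 1/4`.
-/

open Real HurwitzZeta

noncomputable def oddThetaTerm (t : ℝ) (j : ℕ) : ℝ :=
  (-1) ^ j * (2 * (j : ℝ) + 1) * rexp (-π * (2 * (j : ℝ) + 1) ^ 2 * t)

lemma hasSum_oddThetaTerm_sinKernel {t : ℝ} (ht : 0 < t) :
    HasSum (oddThetaTerm t) (sinKernel (1 / 4 : ℝ) t / 2) := by
  have hodd : Function.Injective (fun j : ℕ ↦ 2 * j + 1) := fun a b h ↦ by simp_all
  have heven : ∀ n ∉ Set.range (fun j : ℕ ↦ 2 * j + 1),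
      2 * (n : ℝ) * Real.sin (2 * π * (1 / 4) * n) * rexp (-π * (n : ℝ) ^ 2 * t) = 0 := by
    intro n hn
    obtain ⟨k, rfl⟩ : Even n := Nat.not_odd_iff_even.mp fun ⟨k, hk⟩ ↦ hn ⟨k, hk.symm⟩
    rw [show 2 * π * (1 / 4) * ((k + k : ℕ) : ℝ) = k * π by push_cast; ring,
      Real.sin_nat_mul_pi]
    ring
  have hsin (j : ℕ) : Real.sin (2 * π * (1 / 4) * ((2 * j + 1 : ℕ) : ℝ)) = (-1) ^ j := by
    rw [show 2 * π * (1 / 4) * ((2 * j + 1 : ℕ) : ℝ) = j * π + π / 2 by push_cast; ring,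
      Real.sin_add_pi_div_two, Real.cos_nat_mul_pi]
  refine (((hodd.hasSum_iff heven).mpr (hasSum_nat_sinKernel _ ht)).div_const 2).congr_fun
    fun j ↦ ?_
  simp only [Function.comp_apply, hsin, oddThetaTerm]
  push_cast
  ring

/-- The integer `n` contributes `n + 1/4 = (2j+1)/4`, where `j = 2n` for `n ≥ 0` and
`j = 2(-n-1) + 1` for `n < 0`; this is the enumeration `Equiv.intEquivNat`. -/
lemma hasSum_oddThetaTerm_oddKernel {t : ℝ} (ht : 0 < t) :
    HasSum (oddThetaTerm t) (4 * oddKernel (1 / 4 : ℝ) (16 * t)) := by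
  refine Equiv.intEquivNat.hasSum_iff.mp <|
    ((hasSum_int_oddKernel _ (by positivity)).mul_left 4).congr_fun fun n ↦ ?_
  cases n with
  | ofNat k =>
    change oddThetaTerm t (2 * k) = _
    simp only [oddThetaTerm, pow_mul, neg_one_sq, one_pow, Int.ofNat_eq_natCast,
      Int.cast_natCast]
    push_cast
    ring_nf
  | negSucc k =>
    change oddThetaTerm t (2 * k + 1) = _
    simp only [oddThetaTerm, pow_succ, pow_mul, Int.cast_negSucc]
    push_cast
    ring_nf

lemma tsum_oddThetaTerm_eq_mul_tsum_inv {t : ℝ} (ht : 0 < t) :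
    ∑' j, oddThetaTerm t j =
      8 / (16 * t) ^ (3 / 2 : ℝ) * ∑' j, oddThetaTerm (1 / (16 * t)) j := by
  rw [(hasSum_oddThetaTerm_oddKernel ht).tsum_eq,
    (hasSum_oddThetaTerm_sinKernel (by positivity)).tsum_eq, oddKernel_functional_equation]
  ring

lemma tsum_pos_of_abs_le_geometric {f : ℕ → ℝ} {c : ℝ} (h₀ : 0 < f 0) (hc₀ : 0 ≤ c)
    (hc : c < 1 / 2) (hf : ∀ j, |f (j + 1)| ≤ f 0 * c ^ (j + 1)) : 0 < ∑' j, f j := by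
  have hgeom : HasSum (fun j ↦ f 0 * c ^ (j + 1)) (f 0 * (c * (1 - c)⁻¹)) := by
    simpa only [pow_succ', mul_assoc] using
      ((hasSum_geometric_of_lt_one hc₀ (by linarith)).mul_left c).mul_left (f 0)
  have htail : Summable fun j ↦ f (j + 1) := .of_norm_bounded hgeom.summable hf
  have hbound : |∑' j, f (j + 1)| ≤ f 0 * (c * (1 - c)⁻¹) :=
    htail.hasSum.norm_le_of_bounded hgeom hf
  have hratio : c * (1 - c)⁻¹ < 1 := by
    rw [mul_inv_lt_iff₀ (by linarith)]
    linarith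
  rw [((summable_nat_add_iff 1).mp htail).tsum_eq_zero_add]
  nlinarith [neg_abs_le (∑' j, f (j + 1))]

lemma oddThetaTerm_zero (t : ℝ) : oddThetaTerm t 0 = rexp (-π * t) := by
  simp [oddThetaTerm]

lemma abs_oddThetaTerm_succ_le {t : ℝ} (ht : 1 / 4 ≤ t) (j : ℕ) :
    |oddThetaTerm t (j + 1)| ≤ oddThetaTerm t 0 * (3 * rexp (-(2 * π))) ^ (j + 1) := by
  have hj : (0 : ℝ) ≤ j := j.cast_nonneg
  have hlin : 2 * ((j : ℝ) + 1) + 1 ≤ 3 ^ (j + 1) := by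
    have h := one_add_mul_le_pow (by norm_num : (-2 : ℝ) ≤ 2) (j + 1)
    norm_num at h
    linarith
  -- `(2m+1)² - 1 = 4m(m+1)`, so for `t ≥ 1/4` the exponent gains at least `2πm`
  have hexp : rexp (-π * (2 * ((j : ℝ) + 1) + 1) ^ 2 * t) ≤
      rexp (-π * t) * rexp (-(2 * π)) ^ (j + 1) := by
    rw [← Real.exp_nat_mul, ← Real.exp_add, Real.exp_le_exp]
    push_cast
    nlinarith [mul_le_mul_of_nonneg_left ht (by positivity : 0 ≤ π * (4 * (j + 1) * (j + 2))),
      mul_nonneg (mul_nonneg pi_pos.le hj) (by positivity : (0 : ℝ) ≤ j + 1)]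
  calc |oddThetaTerm t (j + 1)|
      = (2 * ((j : ℝ) + 1) + 1) * rexp (-π * (2 * ((j : ℝ) + 1) + 1) ^ 2 * t) := by
        have hpos : (0 : ℝ) < 2 * ((j : ℝ) + 1) + 1 := by positivity
        simp [oddThetaTerm, abs_mul, abs_of_pos hpos]
    _ ≤ 3 ^ (j + 1) * (rexp (-π * t) * rexp (-(2 * π)) ^ (j + 1)) :=
        mul_le_mul hlin hexp (by positivity) (by positivity)
    _ = oddThetaTerm t 0 * (3 * rexp (-(2 * π))) ^ (j + 1) := by
        rw [oddThetaTerm_zero]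
        ring

lemma three_mul_exp_neg_two_pi_lt : 3 * rexp (-(2 * π)) < 1 / 2 := by
  have h : 6 < rexp (2 * π) := by
    linarith [Real.add_one_lt_exp (x := 2 * π) (by positivity), pi_gt_three]
  rw [Real.exp_neg, ← div_eq_mul_inv, div_lt_iff₀ (Real.exp_pos _)]
  linarith

lemma tsum_oddThetaTerm_pos_of_quarter_le {t : ℝ} (ht : 1 / 4 ≤ t) :
    0 < ∑' j, oddThetaTerm t j :=
  tsum_pos_of_abs_le_geometric (by rw [oddThetaTerm_zero]; positivity) (by positivity)
    three_mul_exp_neg_two_pi_lt (abs_oddThetaTerm_succ_le ht)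

lemma tsum_oddThetaTerm_pos {t : ℝ} (ht : 0 < t) : 0 < ∑' j, oddThetaTerm t j := by
  rcases le_or_gt (1 / 4) t with h | h
  · exact tsum_oddThetaTerm_pos_of_quarter_le h
  · rw [tsum_oddThetaTerm_eq_mul_tsum_inv ht]
    refine mul_pos (by positivity) (tsum_oddThetaTerm_pos_of_quarter_le ?_)
    rw [le_div_iff₀ (by positivity)]
    linarith

lemma exp_mul_oddThetaTerm (t : ℝ) (j : ℕ) :
    rexp (π * t) * oddThetaTerm t j =
      (2 * (j : ℝ) + 1) * (-1) ^ j * rexp (-(8 * π * t)) ^ (j * (j + 1) / 2) := by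
  have htri : ((j * (j + 1) / 2 : ℕ) : ℝ) = j * (j + 1) / 2 := by
    rw [Nat.cast_div (Nat.even_mul_succ_self j).two_dvd two_ne_zero]
    push_cast
    ring
  rw [← Real.exp_nat_mul, htri, oddThetaTerm, mul_left_comm, ← Real.exp_add]
  ring_nf

lemma tsum_odd_mul_neg_one_pow_mul_pow_triangle_pos {q : ℝ} (hq₀ : 0 < q) (hq₁ : q < 1) :
    0 < ∑' j : ℕ, (2 * (j : ℝ) + 1) * (-1) ^ j * q ^ (j * (j + 1) / 2) := by
  set t := -Real.log q / (8 * π)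
  have ht : 0 < t := div_pos (neg_pos.mpr (Real.log_neg hq₀ hq₁)) (by positivity)
  have hq : q = rexp (-(8 * π * t)) := by
    rw [mul_div_cancel₀ _ (by positivity), neg_neg, Real.exp_log hq₀]
  simp_rw [hq, ← exp_mul_oddThetaTerm, tsum_mul_left]
  exact mul_pos (Real.exp_pos _) (tsum_oddThetaTerm_pos ht)

/-- For `α > 1`, `h(α) = Σ_{j=1}^∞ (2j-1)(-1)^{j-1} α^{-j(j-1)/2}` is strictly positive.
(The series is reindexed by `j ↦ j+1`.) -/
theorem h_pos (α : ℝ) (hα : 1 < α) :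
    0 < ∑' j : ℕ, (2 * (j : ℝ) + 1) * (-1) ^ j * α⁻¹ ^ (j * (j + 1) / 2) :=
  tsum_odd_mul_neg_one_pow_mul_pow_triangle_pos (inv_pos.mpr (by linarith))
    (inv_lt_one_of_one_lt₀ hα)
end

section
/- Let 0 < q < 1, f the deformed exponential function with zeros x_{n+1} < x_n < 0 satisfying x_{n+1} < x_n/q, and suppose f(x) = ∏_{n=1}^∞ (1 − x/x_n). Then the critical points of f are exactly the points x_n/q, and the signs of the extrema alternate: (−1)^n f(x_n/q) > 0 for all n ≥ 1. -/
/-!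
The zeros cut `ℝ` into the gaps `(x₁, ∞)`, `(x₂, x₁)`, `(x₃, x₂)`, …, on each of which `f`
has constant sign. Since `f' (xₙ) = f (q xₙ)` and `q xₙ` lies in the gap just to the right of
`xₙ`, the slope of `f` at each zero carries the sign of the previous gap, so `f` changes sign at
every zero; starting from `f 0 = 1` this gives sign `(-1)ⁿ` on `(xₙ₊₁, xₙ)`, which contains
`xₙ / q`. The critical points are read off from `f' (y) = f (q y)`.
-/

open Set Filter Topology

def gap (x : ℕ → ℝ) : ℕ → Set ℝ
  | 0 => Ioi (x 1)
  | n + 1 => Ioo (x (n + 2)) (x (n + 1))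

theorem isPreconnected_gap (x : ℕ → ℝ) : ∀ n, IsPreconnected (gap x n)
  | 0 => isPreconnected_Ioi
  | _ + 1 => isPreconnected_Ioo

theorem ne_of_mem_gap {x : ℕ → ℝ} (hx : StrictAntiOn x (Ici 1)) {n k : ℕ} {y : ℝ}
    (hy : y ∈ gap x n) (hk : 1 ≤ k) : y ≠ x k := by
  rintro rfl
  have hanti := hx.antitoneOn
  cases n with
  | zero => exact (hanti (mem_Ici.2 le_rfl) hk hk).not_gt hy
  | succ n =>
    obtain ⟨hlow, hup⟩ := hy
    rcases le_or_gt k (n + 1) with hkn | hkn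
    · exact (hanti hk (show 1 ≤ n + 1 by omega) hkn).not_gt hup
    · exact (hanti (show 1 ≤ n + 2 by omega) hk hkn).not_gt hlow

theorem IsPreconnected.pos_of_forall_ne_zero {X : Type*} [TopologicalSpace X] {s : Set X}
    {g : X → ℝ} {a b : X} (hs : IsPreconnected s) (hg : ContinuousOn g s)
    (hne : ∀ y ∈ s, g y ≠ 0) (ha : a ∈ s) (hpos : 0 < g a) (hb : b ∈ s) : 0 < g b := by
  by_contra! hneg
  obtain ⟨c, hc, hgc⟩ := hs.intermediate_value hb ha hg ⟨hneg, hpos.le⟩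
  exact hne c hc hgc

theorem exists_mem_Ioo_neg_of_hasDerivAt_pos {g : ℝ → ℝ} {c a b : ℝ} (hd : HasDerivAt g c a)
    (hc : 0 < c) (hga : g a = 0) (hba : b < a) : ∃ y ∈ Ioo b a, g y < 0 := by
  have hslope : Tendsto (slope g a) (𝓝[<] a) (𝓝 c) :=
    (hasDerivWithinAt_iff_tendsto_slope' self_notMem_Iio).1 hd.hasDerivWithinAt
  obtain ⟨y, hpos, hy⟩ :=
    ((hslope.eventually (eventually_gt_nhds hc)).and (Ioo_mem_nhdsLT hba)).exists
  exact ⟨y, hy, neg_of_slope_pos hy.2 hpos hga⟩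

theorem neg_one_pow_mul_pos_of_mem_gap {f : ℝ → ℝ} {x c : ℕ → ℝ} (hcont : Continuous f)
    (hx : StrictAntiOn x (Ici 1)) (hzero : ∀ y, f y = 0 → ∃ k, 1 ≤ k ∧ y = x k)
    (hroot : ∀ n, f (x (n + 1)) = 0) (hderiv : ∀ n, HasDerivAt f (f (c n)) (x (n + 1)))
    (hc : ∀ n, c n ∈ gap x n) (h0 : ∃ y ∈ gap x 0, 0 < f y) :
    ∀ n, ∀ y ∈ gap x n, 0 < (-1 : ℝ) ^ n * f y := by
  have hne : ∀ n, ∀ y ∈ gap x n, (-1 : ℝ) ^ n * f y ≠ 0 := fun n y hy hfy => by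
    obtain ⟨k, hk, rfl⟩ := hzero y ((mul_eq_zero.1 hfy).resolve_left (by simp))
    exact ne_of_mem_gap hx hy hk rfl
  have hsign : ∀ n, (∃ y ∈ gap x n, 0 < (-1 : ℝ) ^ n * f y) →
      ∀ y ∈ gap x n, 0 < (-1 : ℝ) ^ n * f y := fun n ⟨a, ha, hpos⟩ y hy =>
    (isPreconnected_gap x n).pos_of_forall_ne_zero (g := fun y => (-1 : ℝ) ^ n * f y)
      (continuous_const.mul hcont).continuousOn (hne n) ha hpos hy
  intro n
  induction n with
  | zero => simpa using hsign 0 (by simpa using h0)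
  | succ n ih =>
    refine hsign (n + 1) ?_
    obtain ⟨y, hy, hneg⟩ := exists_mem_Ioo_neg_of_hasDerivAt_pos ((hderiv n).const_mul _)
      (ih _ (hc n)) (by simp [hroot]) (hx (by simp) (by simp) (by omega) : x (n + 2) < x (n + 1))
    exact ⟨y, hy, by rw [pow_succ]; linarith⟩

theorem mul_mem_gap {x : ℕ → ℝ} {q : ℝ} (hq : 0 < q)
    (hx : ∀ n, 1 ≤ n → x (n + 1) < x n / q ∧ x n / q < x n) (n : ℕ) :
    q * x (n + 1) ∈ gap x n := by
  have hlow : x (n + 1) < q * x (n + 1) := by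
    have := (hx (n + 1) (by omega)).2
    rwa [div_lt_iff₀' hq] at this
  cases n with
  | zero => exact hlow
  | succ n =>
    refine ⟨hlow, ?_⟩
    have := (hx (n + 1) (by omega)).1
    rwa [lt_div_iff₀' hq] at this

theorem critical_points_alternate_general (q : ℝ) (hq0 : 0 < q)
    (f : ℝ → ℝ)
    (hf : ∀ y : ℝ, f y = ∑' n : ℕ, y ^ n * q ^ (n * (n - 1) / 2) / (n.factorial : ℝ))
    (hderiv : ∀ y : ℝ, HasDerivAt f (f (q * y)) y)
    (x : ℕ → ℝ)
    (hxlt : ∀ n : ℕ, 1 ≤ n → x (n + 1) < x n / q ∧ x n / q < x n ∧ x n < 0)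
    (hzeros : ∀ y : ℝ, f y = 0 ↔ ∃ n : ℕ, 1 ≤ n ∧ y = x n) :
    (∀ y : ℝ, deriv f y = 0 ↔ ∃ n : ℕ, 1 ≤ n ∧ y = x n / q)
      ∧ ∀ n : ℕ, 1 ≤ n → 0 < (-1 : ℝ) ^ n * f (x n / q) := by
  have hf0 : f 0 = 1 := by
    rw [hf, tsum_eq_single 0 fun n hn => by simp [zero_pow hn]]
    simp
  have hx : StrictAntiOn x (Ici 1) := strictAntiOn_Ici_of_lt_pred fun m hm => by
    obtain ⟨k, rfl⟩ : ∃ k, m = k + 1 := ⟨m - 1, by omega⟩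
    have := hxlt k (by omega)
    rw [Order.pred_eq_sub_one, Nat.add_sub_cancel]
    linarith
  have hsign := neg_one_pow_mul_pos_of_mem_gap
    (continuous_iff_continuousAt.2 fun y => (hderiv y).continuousAt) hx (fun y => (hzeros y).1)
    (fun n => (hzeros _).2 ⟨n + 1, by omega, rfl⟩) (fun n => hderiv (x (n + 1)))
    (mul_mem_gap hq0 fun n hn => (hxlt n hn).imp_right And.left)
    ⟨0, (hxlt 1 le_rfl).2.2, by simp [hf0]⟩
  refine ⟨fun y => ?_, fun n hn => ?_⟩
  · rw [(hderiv y).deriv, hzeros]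
    simp only [eq_div_iff hq0.ne', mul_comm y q]
  · obtain ⟨k, rfl⟩ : ∃ k, n = k + 1 := ⟨n - 1, by omega⟩
    exact hsign (k + 1) _ ⟨(hxlt (k + 1) hn).1, (hxlt (k + 1) hn).2.1⟩

/-- Let `0 < q < 1`, `f` the deformed exponential function (on `ℝ`) with zeros
`x_{n+1} < x_n/q < x_n < 0` (`n ≥ 1`), satisfying `f' (y) = f(qy)` and
`f(y) = ∏_{n=1}^∞ (1 - y/x_n)`. Then the critical points of `f` are exactly the points
`x_n/q`, and the signs of the extrema alternate: `(-1)^n f(x_n/q) > 0` for all `n ≥ 1`. -/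
theorem critical_points_alternate (q : ℝ) (hq0 : 0 < q) (hq1 : q < 1)
    (f : ℝ → ℝ)
    (hf : ∀ y : ℝ, f y = ∑' n : ℕ, y ^ n * q ^ (n * (n - 1) / 2) / (n.factorial : ℝ))
    (hderiv : ∀ y : ℝ, HasDerivAt f (f (q * y)) y)
    (x : ℕ → ℝ)
    (hxlt : ∀ n : ℕ, 1 ≤ n → x (n + 1) < x n / q ∧ x n / q < x n ∧ x n < 0)
    (hzeros : ∀ y : ℝ, f y = 0 ↔ ∃ n : ℕ, 1 ≤ n ∧ y = x n)
    (hprod : ∀ y : ℝ, f y = ∏' n : ℕ, (1 - y / x (n + 1))) :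
    (∀ y : ℝ, deriv f y = 0 ↔ ∃ n : ℕ, 1 ≤ n ∧ y = x n / q)
      ∧ ∀ n : ℕ, 1 ≤ n → 0 < (-1 : ℝ) ^ n * f (x n / q) :=
  critical_points_alternate_general q hq0 f hf hderiv x hxlt hzeros
end

section
/- Let α > 1 and λ > 0, and for integers k ≥ 1 set u_n = (k + λ/k)^n α^{n(2k−n−1)/2}/n! and v_j = u_{2k−1−j} − u_j. Then for each fixed integer j ≥ 0, as k → ∞, v_{k−j} = ((k + λ/k)^{k+j−3}/(k+j−1)!) · [(2j−1)λ + j(j−1)(2j−1)/6 + O(1/k)] · α^{(k+j−1)(k−j)/2}. -/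
/-!
Both terms of `v_{k-j} = u_{k+j-1} - u_{k-j}` carry the same power `α^{(k+j-1)(k-j)/2}`, so only
`c^{k+j-1}/(k+j-1)! - c^{k-j}/(k-j)!` with `c = k + λ/k` has to be expanded. Writing `x = 1/k²`,
`c = k(1 + λx)` and `(k+j-1)!/(k-j)! = k^{2j-1} ∏_{i<j} (1 - i²x)`, this difference becomes
`c^{k+j-3}/(k+j-1)!` times `x⁻¹ (w² - w³ ∏_{i<j} (1 - i²x) / w^{2j})` with `w = 1 + λx`. After
multiplying by `w^{2j}` the bracket is a polynomial in `x` whose constant and linear coefficients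
are exactly cancelled by the main term `(2j-1)λ + j(j-1)(2j-1)/6`, so the remainder is `x` times a
rational function that is continuous at `0`, i.e. `O(1/k²)`.
-/

open Filter Asymptotics Polynomial Finset Topology

namespace Polynomial

variable {R : Type*} [CommSemiring R]

theorem coeff_one_mul (p q : R[X]) :
    (p * q).coeff 1 = p.coeff 0 * q.coeff 1 + p.coeff 1 * q.coeff 0 := by
  rw [coeff_mul, show antidiagonal 1 = {(0, 1), (1, 0)} from rfl]
  simp

theorem coeff_one_prod_of_coeff_zero_eq_one {ι : Type*} (s : Finset ι) (f : ι → R[X])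
    (hf : ∀ i ∈ s, (f i).coeff 0 = 1) :
    (∏ i ∈ s, f i).coeff 1 = ∑ i ∈ s, (f i).coeff 1 := by
  classical
  induction s using Finset.induction_on with
  | empty => simp [coeff_one]
  | insert i s hi ih =>
    rw [prod_insert hi, sum_insert hi, coeff_one_mul, coeff_zero_prod,
      prod_eq_one fun i hi' => hf i (mem_insert_of_mem hi'),
      ih fun i hi' => hf i (mem_insert_of_mem hi'), hf i (mem_insert_self i s)]
    ring

theorem coeff_one_pow_of_coeff_zero_eq_one {p : R[X]} (hp : p.coeff 0 = 1) (n : ℕ) :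
    (p ^ n).coeff 1 = n * p.coeff 1 := by
  simpa [nsmul_eq_mul] using
    coeff_one_prod_of_coeff_zero_eq_one (range n) (fun _ => p) fun _ _ => hp

end Polynomial

theorem sum_range_sq (j : ℕ) :
    ∑ i ∈ range j, (i : ℝ) ^ 2 = j * (j - 1) * (2 * j - 1) / 6 := by
  induction j with
  | zero => simp
  | succ n ih => rw [sum_range_succ, ih]; push_cast; ring

-- `x · w^{2j}` times the remainder term of the theorem at `x = 1/k²`, where `w = 1 + λx`.
noncomputable def errorPoly (lam : ℝ) (j : ℕ) : ℝ[X] :=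
  (1 + C lam * X) ^ (2 * j + 2) - (1 + C lam * X) ^ 3 * ∏ i ∈ range j, (1 - C ((i : ℝ) ^ 2) * X)
    - C ((2 * j - 1) * lam + j * (j - 1) * (2 * j - 1) / 6) * X * (1 + C lam * X) ^ (2 * j)

theorem X_sq_dvd_errorPoly (lam : ℝ) (j : ℕ) : X ^ 2 ∣ errorPoly lam j := by
  have hB0 : (1 + C lam * X).coeff 0 = 1 := by simp
  have hBn0 : ∀ n, ((1 + C lam * X) ^ n).coeff 0 = 1 := by simp [coeff_zero_eq_eval_zero]
  have hQ0 : ∀ i ∈ range j, (1 - C ((i : ℝ) ^ 2) * X).coeff 0 = 1 := by simp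
  rw [X_pow_dvd_iff]
  intro d hd
  interval_cases d
  · simp [errorPoly, coeff_zero_eq_eval_zero, eval_prod]
  · simp only [errorPoly, coeff_sub, coeff_one_mul, mul_coeff_zero, coeff_zero_prod,
      coeff_one_prod_of_coeff_zero_eq_one _ _ hQ0, coeff_one_pow_of_coeff_zero_eq_one hB0,
      hBn0, coeff_add, coeff_C_zero, coeff_C_of_ne_zero one_ne_zero, coeff_X_one, coeff_X_zero,
      coeff_one]
    simp [sum_range_sq]
    ring

theorem factorial_add_sub_one_mul_self_eq {j k : ℕ} (hjk : j ≤ k) (hk : 0 < k) :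
    ((k + j - 1).factorial : ℝ) * k = (k - j).factorial * ∏ i ∈ range j, ((k : ℝ) ^ 2 - i ^ 2) := by
  induction j with
  | zero =>
    rw [prod_range_zero, mul_one, Nat.add_zero, Nat.sub_zero, ← Nat.cast_mul, mul_comm,
      Nat.mul_factorial_pred hk.ne']
  | succ j ih =>
    have hsucc : k + (j + 1) - 1 = (k + j - 1) + 1 := by omega
    have hpred : k - j = (k - (j + 1)) + 1 := by omega
    have ih := ih (by omega)
    rw [hpred, Nat.factorial_succ] at ih
    rw [hsucc, Nat.factorial_succ, prod_range_succ]
    push_cast [Nat.cast_sub (by omega : 1 ≤ k + j), Nat.cast_sub hjk] at ih ⊢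
    linear_combination ((k : ℝ) + j) * ih

theorem pow_div_factorial_sub_pow_div_factorial {j k : ℕ} (hk : j + 3 ≤ k) {w : ℝ} (hw : w ≠ 0) :
    (k * w) ^ (k + j - 1) / ((k + j - 1).factorial : ℝ) - (k * w) ^ (k - j) / (k - j).factorial
      = (k * w) ^ (k + j - 3) / ((k + j - 1).factorial : ℝ)
        * (k ^ 2 * (w ^ 2 - w ^ 3 * (∏ i ∈ range j, (1 - i ^ 2 * ((k : ℝ) ^ 2)⁻¹)) / w ^ (2 * j))) := by
  have hk0 : (k : ℝ) ≠ 0 := by norm_cast; omega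
  have hfact := factorial_add_sub_one_mul_self_eq (by omega : j ≤ k) (by omega : 0 < k)
  have hprod : ∏ i ∈ range j, ((k : ℝ) ^ 2 - i ^ 2)
      = k ^ (2 * j) * ∏ i ∈ range j, (1 - i ^ 2 * ((k : ℝ) ^ 2)⁻¹) := by
    rw [pow_mul, ← card_range j, ← prod_const, card_range, ← prod_mul_distrib]
    refine prod_congr rfl fun i _ => ?_
    field_simp
  have hpow : (k * w) ^ (k - j) * (k * w) ^ (2 * j) = (k * w) ^ (k + j - 3) * (k * w) ^ 3 := by
    rw [← pow_add, ← pow_add]; congr 1; omega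
  rw [hprod] at hfact
  set P := ∏ i ∈ range j, (1 - i ^ 2 * ((k : ℝ) ^ 2)⁻¹)
  have hsecond : ((k + j - 1).factorial : ℝ) * (k * w) ^ (k - j) * w ^ (2 * j)
      = (k - j).factorial * (k * w) ^ (k + j - 3) * (k ^ 2 * (w ^ 3 * P)) := by
    refine mul_left_cancel₀ hk0 ?_
    linear_combination (k * w) ^ (k - j) * w ^ (2 * j) * hfact + (k - j).factorial * P * hpow
  have hfirst : (k * w) ^ (k + j - 1) = (k * w) ^ (k + j - 3) * (k ^ 2 * w ^ 2) := by
    rw [← mul_pow, ← pow_add]; congr 1; omega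
  rw [hfirst]
  field_simp
  linear_combination -hsecond

theorem errorPoly_eval_div {lam x : ℝ} {j : ℕ} (hx : x ≠ 0) (hw : 1 + lam * x ≠ 0) {Ψ : ℝ[X]}
    (hΨ : errorPoly lam j = X ^ 2 * Ψ) :
    x⁻¹ * ((1 + lam * x) ^ 2 - (1 + lam * x) ^ 3 * (∏ i ∈ range j, (1 - i ^ 2 * x))
        / (1 + lam * x) ^ (2 * j))
      = (2 * j - 1) * lam + j * (j - 1) * (2 * j - 1) / 6
        + x * (Ψ.eval x / (1 + lam * x) ^ (2 * j)) := by
  have h := congrArg (eval x) hΨ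
  simp only [errorPoly, eval_sub, eval_mul, eval_pow, eval_add, eval_one, eval_C, eval_X,
    eval_prod] at h
  generalize ∏ i ∈ range j, (1 - (i : ℝ) ^ 2 * x) = P at h ⊢
  rw [inv_mul_eq_iff_eq_mul₀ hx]
  field_simp
  linear_combination 6 * h

theorem tendsto_inv_sq_natCast_atTop_zero :
    Tendsto (fun k : ℕ => ((k : ℝ) ^ 2)⁻¹) atTop (𝓝 0) :=
  tendsto_inv_atTop_zero.comp ((tendsto_pow_atTop two_ne_zero).comp tendsto_natCast_atTop_atTop)

theorem isBigO_inv_sq_mul_comp_inv_sq {f : ℝ → ℝ} (hf : ContinuousAt f 0) :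
    (fun k : ℕ => ((k : ℝ) ^ 2)⁻¹ * f ((k : ℝ) ^ 2)⁻¹) =O[atTop] fun k => (k : ℝ)⁻¹ := by
  have hinv : (fun k : ℕ => ((k : ℝ) ^ 2)⁻¹) =O[atTop] fun k => (k : ℝ)⁻¹ := by
    refine IsBigO.of_bound 1 ?_
    filter_upwards [eventually_ge_atTop 1] with k hk
    have hk : (1 : ℝ) ≤ k := by exact_mod_cast hk
    rw [norm_inv, norm_inv, one_mul, norm_pow, Real.norm_natCast]
    exact inv_anti₀ (by positivity) (by nlinarith)
  simpa using hinv.mul ((hf.tendsto.comp tendsto_inv_sq_natCast_atTop_zero).isBigO_one ℝ)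

theorem v_asymptotic_general (α lam : ℝ)
    (u : ℕ → ℕ → ℝ)
    (hu : ∀ k n : ℕ, 1 ≤ k → u k n = ((k : ℝ) + lam / (k : ℝ)) ^ n
      * α ^ (((n : ℝ) * (2 * (k : ℝ) - (n : ℝ) - 1)) / 2) / (n.factorial : ℝ))
    (v : ℕ → ℕ → ℝ)
    (hv : ∀ k i : ℕ, 1 ≤ k → v k i = u k (2 * k - 1 - i) - u k i)
    (j : ℕ) :
    ∃ E : ℕ → ℝ, (E =O[atTop] fun k : ℕ => ((k : ℝ))⁻¹) ∧
      ∀ᶠ k : ℕ in atTop,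
        v k (k - j) = ((k : ℝ) + lam / (k : ℝ)) ^ (k + j - 3) / (((k + j - 1).factorial : ℝ))
          * ((2 * (j : ℝ) - 1) * lam + (j : ℝ) * ((j : ℝ) - 1) * (2 * (j : ℝ) - 1) / 6 + E k)
          * α ^ ((((k : ℝ) + (j : ℝ) - 1) * ((k : ℝ) - (j : ℝ))) / 2) := by
  obtain ⟨Ψ, hΨ⟩ := X_sq_dvd_errorPoly lam j
  have hf : ContinuousAt (fun x => Ψ.eval x / (1 + lam * x) ^ (2 * j)) 0 :=
    (Ψ.continuousAt).div (by fun_prop) (by simp)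
  refine ⟨_, isBigO_inv_sq_mul_comp_inv_sq hf, ?_⟩
  have hw_eventually : ∀ᶠ k : ℕ in atTop, 1 + lam * ((k : ℝ) ^ 2)⁻¹ ≠ 0 :=
    ((tendsto_inv_sq_natCast_atTop_zero.const_mul lam).const_add 1).eventually_ne (by simp)
  filter_upwards [eventually_ge_atTop (j + 3), hw_eventually] with k hk hw
  have hk0 : (k : ℝ) ≠ 0 := by norm_cast; omega
  have hc : (k : ℝ) + lam / k = k * (1 + lam * ((k : ℝ) ^ 2)⁻¹) := by field_simp
  have hcast₁ : ((k + j - 1 : ℕ) : ℝ) = k + j - 1 := by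
    rw [Nat.cast_sub (by omega)]; push_cast; ring
  have hcast₂ : ((k - j : ℕ) : ℝ) = k - j := Nat.cast_sub (by omega)
  rw [hv k _ (by omega), show 2 * k - 1 - (k - j) = k + j - 1 by omega, hu k _ (by omega),
    hu k _ (by omega), hcast₁, hcast₂, hc]
  calc _ = ((k * (1 + lam * ((k : ℝ) ^ 2)⁻¹)) ^ (k + j - 1) / ((k + j - 1).factorial : ℝ)
          - (k * (1 + lam * ((k : ℝ) ^ 2)⁻¹)) ^ (k - j) / (k - j).factorial)
          * α ^ ((((k : ℝ) + (j : ℝ) - 1) * ((k : ℝ) - (j : ℝ))) / 2) := by ring_nf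
    _ = _ := by
      have h := errorPoly_eval_div (x := ((k : ℝ) ^ 2)⁻¹) (by positivity) hw hΨ
      rw [inv_inv] at h
      rw [pow_div_factorial_sub_pow_div_factorial hk hw, h]

/-- Let `α > 1`, `λ > 0`, and for integers `k ≥ 1` set
`u_n = (k + λ/k)^n α^{n(2k-n-1)/2}/n!` and `v_j = u_{2k-1-j} - u_j`. Then for each fixed
integer `j ≥ 0`, as `k → ∞`,
`v_{k-j} = ((k + λ/k)^{k+j-3}/(k+j-1)!) · [(2j-1)λ + j(j-1)(2j-1)/6 + O(1/k)] · α^{(k+j-1)(k-j)/2}`. -/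
theorem v_asymptotic (α lam : ℝ) (hα : 1 < α) (hlam : 0 < lam)
    (u : ℕ → ℕ → ℝ)
    (hu : ∀ k n : ℕ, 1 ≤ k → u k n = ((k : ℝ) + lam / (k : ℝ)) ^ n
      * α ^ (((n : ℝ) * (2 * (k : ℝ) - (n : ℝ) - 1)) / 2) / (n.factorial : ℝ))
    (v : ℕ → ℕ → ℝ)
    (hv : ∀ k i : ℕ, 1 ≤ k → v k i = u k (2 * k - 1 - i) - u k i)
    (j : ℕ) :
    ∃ E : ℕ → ℝ, (E =O[atTop] fun k : ℕ => ((k : ℝ))⁻¹) ∧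
      ∀ᶠ k : ℕ in atTop,
        v k (k - j) = ((k : ℝ) + lam / (k : ℝ)) ^ (k + j - 3) / (((k + j - 1).factorial : ℝ))
          * ((2 * (j : ℝ) - 1) * lam + (j : ℝ) * ((j : ℝ) - 1) * (2 * (j : ℝ) - 1) / 6 + E k)
          * α ^ ((((k : ℝ) + (j : ℝ) - 1) * ((k : ℝ) - (j : ℝ))) / 2) :=
  v_asymptotic_general α lam u hu v hv j
end

section
/- Let 0 < q < 1 and let f(x) = ∏_{n=1}^∞ (1 − x/x_n) be entire with zeros x_{n+1} < x_n < 0. Then for every integer n ≥ 1, Σ over all n-element index sets i_1 < ... < i_n of 1/(x_{i_1}·...·x_{i_n}) equals (−1)^n q^{n(n−1)/2}/n!, i.e., the elementary symmetric functions of the reciprocals 1/x_i are given by the Taylor coefficients of f. -/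
/-!
Put `c i = -1 / x i > 0`. For `y > 0` we have `f y > 1`, so the product `∏ (1 + y c_i)` really
converges to `f y`; as its factors are `≥ 1`, expanding it gives an absolutely convergent sum
over finite sets of indices, and grouping that sum by cardinality writes `f y` as the power
series `∑ e_n y^n`, where `e_n` is the `n`-th elementary symmetric function of the `c_i`.
Comparing with the defining series of `f` for small `y > 0` identifies the coefficients, by the
identity theorem for power series, so `e_n = q^(n(n-1)/2) / n!`, and the sum in question is
`(-1)^n e_n`.
-/

open Finset Filter Topology

section FinsetProd

variable {ι : Type*} {c : ι → ℝ}

theorem summable_finsetProd_of_multipliable_one_add (hc : ∀ i, 0 ≤ c i)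
    (h : Multipliable fun i ↦ 1 + c i) : Summable fun s : Finset ι ↦ ∏ i ∈ s, c i := by
  classical
  obtain ⟨r, -, s₀, hr⟩ := h.eventually_bounded_finsetProd
  refine summable_of_sum_le (c := r) (fun s ↦ prod_nonneg fun i _ ↦ hc i) fun T ↦ ?_
  calc ∑ s ∈ T, ∏ i ∈ s, c i
      ≤ ∑ s ∈ (T.biUnion id ∪ s₀).powerset, ∏ i ∈ s, c i :=
        sum_le_sum_of_subset_of_nonneg
          (fun s hs ↦ mem_powerset.2 ((subset_biUnion_of_mem id hs).trans subset_union_left))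
          fun s _ _ ↦ prod_nonneg fun i _ ↦ hc i
    _ = ∏ i ∈ T.biUnion id ∪ s₀, (1 + c i) := (prod_one_add _).symm
    _ ≤ r := hr _ subset_union_right

theorem hasSum_finsetProd_of_hasProd_one_add (hc : ∀ i, 0 ≤ c i) {a : ℝ}
    (h : HasProd (fun i ↦ 1 + c i) a) : HasSum (fun s : Finset ι ↦ ∏ i ∈ s, c i) a := by
  have hs := summable_finsetProd_of_multipliable_one_add hc h.multipliable
  rw [← h.tprod_eq, tprod_one_add hs]
  exact hs.hasSum

/-- `∑_{#s = n} ∏_{i ∈ s} c i`, with the junk value `0` when this sum does not converge. -/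
noncomputable def tsumEsymm (c : ι → ℝ) (n : ℕ) : ℝ :=
  ∑' s : {s : Finset ι // s.card = n}, ∏ i ∈ (s : Finset ι), c i

theorem tsumEsymm_nonneg (hc : ∀ i, 0 ≤ c i) (n : ℕ) : 0 ≤ tsumEsymm c n :=
  tsum_nonneg fun _ ↦ prod_nonneg fun i _ ↦ hc i

theorem hasSum_tsumEsymm (h : Summable fun s : Finset ι ↦ ∏ i ∈ s, c i) (n : ℕ) :
    HasSum (fun s : {s : Finset ι // s.card = n} ↦ ∏ i ∈ (s : Finset ι), c i) (tsumEsymm c n) :=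
  (h.subtype _).hasSum

theorem hasSum_tsumEsymm_mul_pow {y a : ℝ}
    (h : HasSum (fun s : Finset ι ↦ ∏ i ∈ s, y * c i) a) :
    HasSum (fun n ↦ tsumEsymm c n * y ^ n) a := by
  have fiber (n : ℕ) :
      ∑' s : card ⁻¹' {n}, ∏ i ∈ s.1, y * c i = tsumEsymm c n * y ^ n := by
    rw [tsumEsymm, ← tsum_mul_right]
    refine tsum_congr fun s ↦ ?_
    rw [prod_mul_distrib, prod_const, s.2, mul_comm]
  simpa only [fiber] using h.tsum_fiberwise card

end FinsetProd

theorem eq_of_frequently_tsum_mul_pow_eq {𝕜 : Type*} [NontriviallyNormedField 𝕜]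
    [CompleteSpace 𝕜] {a b : ℕ → 𝕜} {r : NNReal} (hr : 0 < r)
    (ha : Summable fun n ↦ ‖a n‖ * r ^ n) (hb : Summable fun n ↦ ‖b n‖ * r ^ n)
    (h : ∃ᶠ y in 𝓝[≠] 0, ∑' n, a n * y ^ n = ∑' n, b n * y ^ n) : a = b := by
  set p := FormalMultilinearSeries.ofScalars 𝕜 (a - b)
  have hp : (r : ENNReal) ≤ p.radius := by
    refine p.le_radius_of_summable_norm ((ha.add hb).of_nonneg_of_le (fun n ↦ by positivity)
      fun n ↦ ?_)
    rw [FormalMultilinearSeries.ofScalars_norm, ← add_mul]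
    gcongr
    exact norm_sub_le _ _
  have hps := (p.hasFPowerSeriesOnBall ((ENNReal.coe_pos.2 hr).trans_le hp)).hasFPowerSeriesAt
  have summable_of_norm_lt {c : ℕ → 𝕜} (hc : Summable fun n ↦ ‖c n‖ * r ^ n) {y : 𝕜}
      (hy : ‖y‖ < r) : Summable fun n ↦ c n * y ^ n :=
    .of_norm_bounded hc fun n ↦ by
      rw [norm_mul, norm_pow]
      gcongr
  have hsum_zero : ∃ᶠ y in 𝓝[≠] 0, p.sum y = 0 := by
    have hball : ∀ᶠ y in 𝓝[≠] (0 : 𝕜), ‖y‖ < r :=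
      nhdsWithin_le_nhds <| mem_of_superset (Metric.ball_mem_nhds 0 hr) fun _ ↦
        mem_ball_zero_iff.1
    refine (h.and_eventually hball).mono fun y ⟨hy, hyr⟩ ↦ ?_
    simp only [p, FormalMultilinearSeries.sum, FormalMultilinearSeries.ofScalars_apply_eq,
      Pi.sub_apply, smul_eq_mul, sub_mul]
    rw [(summable_of_norm_lt ha hyr).tsum_sub (summable_of_norm_lt hb hyr), hy, sub_self]
  have := hps.locally_zero_iff.1 (hps.analyticAt.frequently_zero_iff_eventually_zero.1 hsum_zero)
  rw [FormalMultilinearSeries.ofScalars_series_eq_zero] at this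
  exact sub_eq_zero.1 this

theorem tsumEsymm_eq_of_hasProd_of_hasSum {ι : Type*} {c : ι → ℝ} (hc : ∀ i, 0 ≤ c i)
    {F : ℝ → ℝ} {b : ℕ → ℝ} (hb : Summable fun n ↦ ‖b n‖)
    (hprod : ∀ y, 0 < y → HasProd (fun i ↦ 1 + y * c i) (F y))
    (hsum : ∀ y, 0 < y → HasSum (fun n ↦ b n * y ^ n) (F y)) : tsumEsymm c = b := by
  have hesymm (y : ℝ) (hy : 0 < y) : HasSum (fun n ↦ tsumEsymm c n * y ^ n) (F y) :=
    hasSum_tsumEsymm_mul_pow <|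
      hasSum_finsetProd_of_hasProd_one_add (fun i ↦ mul_nonneg hy.le (hc i)) (hprod y hy)
  refine eq_of_frequently_tsum_mul_pow_eq (r := 1) one_pos ?_ (by simpa using hb) ?_
  · simpa [abs_of_nonneg (tsumEsymm_nonneg hc _)] using (hesymm 1 one_pos).summable
  · have hpos : ∃ᶠ y in 𝓝[≠] (0 : ℝ), 0 < y :=
      (eventually_mem_nhdsWithin (a := 0) (s := Set.Ioi 0)).frequently.filter_mono
        (nhdsWithin_mono _ fun _ hy ↦ ne_of_gt hy)
    exact hpos.mono fun y hy ↦ (hesymm y hy).tsum_eq.trans (hsum y hy).tsum_eq.symm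

section DeformedExponential

variable {q : ℝ}

theorem summable_qpow_div_factorial_mul_pow (hq : |q| ≤ 1) (y : ℝ) :
    Summable fun n : ℕ ↦ ‖q ^ (n * (n - 1) / 2) / n.factorial * y ^ n‖ := by
  refine (Real.summable_pow_div_factorial |y|).of_nonneg_of_le (fun n ↦ by positivity)
    fun n ↦ ?_
  rw [norm_mul, norm_div, norm_pow, norm_pow, Real.norm_natCast, Real.norm_eq_abs,
    Real.norm_eq_abs, div_mul_eq_mul_div]
  gcongr
  exact mul_le_of_le_one_left (by positivity) (pow_le_one₀ (abs_nonneg q) hq)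

theorem one_add_le_tsum_qpow_div_factorial_mul_pow (hq0 : 0 ≤ q) (hq1 : q ≤ 1) {y : ℝ}
    (hy : 0 ≤ y) : 1 + y ≤ ∑' n : ℕ, q ^ (n * (n - 1) / 2) / n.factorial * y ^ n := by
  have hs := (summable_qpow_div_factorial_mul_pow (abs_le.2 ⟨by linarith, hq1⟩) y).of_norm
  simpa [sum_range_succ] using hs.sum_le_tsum (range 2) fun n _ ↦ by positivity

end DeformedExponential

theorem elementary_symmetric_reciprocals_general (q : ℝ) (hq0 : 0 < q) (hq1 : q < 1)
    (x : ℕ → ℝ) (hxneg : ∀ n : ℕ, x n < 0)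
    (f : ℝ → ℝ)
    (hf : ∀ y : ℝ, f y = ∑' n : ℕ, y ^ n * q ^ (n * (n - 1) / 2) / (n.factorial : ℝ))
    (hprod : ∀ y : ℝ, f y = ∏' n : ℕ, (1 - y / x n)) :
    ∀ n : ℕ, 1 ≤ n →
      HasSum (fun s : {s : Finset ℕ // s.card = n} => ∏ i ∈ (s : Finset ℕ), (x i)⁻¹)
        ((-1 : ℝ) ^ n * q ^ (n * (n - 1) / 2) / (n.factorial : ℝ)) := by
  set c : ℕ → ℝ := fun i ↦ -(x i)⁻¹
  have hc (i : ℕ) : 0 ≤ c i := neg_nonneg.2 (inv_nonpos.2 (hxneg i).le)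
  have hq : |q| ≤ 1 := abs_le.2 ⟨by linarith, hq1.le⟩
  have hf_eq (y : ℝ) : f y = ∑' n : ℕ, q ^ (n * (n - 1) / 2) / n.factorial * y ^ n := by
    rw [hf]
    exact tsum_congr fun n ↦ by ring
  -- `tprod` is `1` on non-multipliable families, so `f y > 1` forces the product to converge.
  have hf_prod (y : ℝ) (hy : 0 < y) : HasProd (fun i ↦ 1 + y * c i) (f y) := by
    have hmul : Multipliable fun i ↦ 1 - y / x i := by
      by_contra hcon
      have := one_add_le_tsum_qpow_div_factorial_mul_pow hq0.le hq1.le hy.le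
      rw [← hf_eq, hprod, tprod_eq_one_of_not_multipliable hcon] at this
      linarith
    simpa only [hprod, c, div_eq_mul_inv, sub_eq_add_neg, mul_neg] using hmul.hasProd
  have hcoeff := tsumEsymm_eq_of_hasProd_of_hasSum hc
    (by simpa using summable_qpow_div_factorial_mul_pow hq 1) hf_prod
    fun y _ ↦ hf_eq y ▸ (summable_qpow_div_factorial_mul_pow hq y).of_norm.hasSum
  intro n _
  have hsign : (fun s : {s : Finset ℕ // s.card = n} ↦ ∏ i ∈ (s : Finset ℕ), (x i)⁻¹) =
      fun s ↦ (-1) ^ n * ∏ i ∈ s.1, c i := by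
    funext ⟨s, hs⟩
    subst hs
    rw [← prod_const, ← prod_mul_distrib]
    exact prod_congr rfl fun i _ ↦ by ring
  have hsummable : Summable fun s : Finset ℕ ↦ ∏ i ∈ s, c i :=
    summable_finsetProd_of_multipliable_one_add hc (by simpa using (hf_prod 1 one_pos).multipliable)
  rw [hsign, mul_div_assoc, ← congrFun hcoeff n]
  exact (hasSum_tsumEsymm hsummable n).mul_left _

/-- Let `0 < q < 1` and let `f(y) = Σ_{n=0}^∞ y^n q^{n(n-1)/2}/n! = ∏_{n=1}^∞ (1 - y/x_n)`
be entire with strictly decreasing negative zeros `(x_n)`. Then for every integer `n ≥ 1`,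
the sum over all `n`-element index sets `i₁ < ... < iₙ` of `1/(x_{i₁}·...·x_{iₙ})` equals
`(-1)^n q^{n(n-1)/2}/n!`: the elementary symmetric functions of the reciprocals `1/x_i`
are given by the Taylor coefficients of `f`. -/
theorem elementary_symmetric_reciprocals (q : ℝ) (hq0 : 0 < q) (hq1 : q < 1)
    (x : ℕ → ℝ) (hxanti : StrictAnti x) (hxneg : ∀ n : ℕ, x n < 0)
    (f : ℝ → ℝ)
    (hf : ∀ y : ℝ, f y = ∑' n : ℕ, y ^ n * q ^ (n * (n - 1) / 2) / (n.factorial : ℝ))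
    (hprod : ∀ y : ℝ, f y = ∏' n : ℕ, (1 - y / x n)) :
    ∀ n : ℕ, 1 ≤ n →
      HasSum (fun s : {s : Finset ℕ // s.card = n} => ∏ i ∈ (s : Finset ℕ), (x i)⁻¹)
        ((-1 : ℝ) ^ n * q ^ (n * (n - 1) / 2) / (n.factorial : ℝ)) :=
  elementary_symmetric_reciprocals_general q hq0 hq1 x hxneg f hf hprod
end
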